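/- Let R = GF(2)[c]/(c³) and S = R[[d]]. For all natural numbers u ≥ 2 and a ∈ {1, 3}, the element (1 + c)^a·(1 + c + d)·(1 + d + c²d)·(1 + d)^{-1} is a unit in S, and for every i ≡ 0 (mod 4) the coefficient of c² in the d^i coefficient of ((1 + c)^a·(1 + c + d)·(1 + d + c²d)·(1 + d)^{-1})^{-1} equals the coefficient of c² in (1 + c)^{-(a+1)}, namely C(a+2, 2) mod 2. -/

import Mathlib

open Polynomial PowerSeries

noncomputable section

/-- The ring `R = GF(2)[c] / (c³)`. -/
abbrev R2 : Type := AdjoinRoot (Polynomial.X ^ 3 : Polynomial (ZMod 2))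

/-- The class of the variable `c` in `R = GF(2)[c] / (c³)`. -/
def cR : R2 := AdjoinRoot.root _

/-- The power series ring `S = R[[d]]`. -/
abbrev S2 : Type := PowerSeries R2

/-- The image of `c` in `S = R[[d]]`. -/
def cS : S2 := PowerSeries.C (R := R2) cR

/-- The variable `d` of `S = R[[d]]`. -/
def dS : S2 := PowerSeries.X

/-- The coefficient of `c²` of an element of `R = GF(2)[c] / (c³)`,
computed via the unique representative polynomial of degree `< 3`. -/
def coefc2 (x : R2) : ZMod 2 :=
  (AdjoinRoot.modByMonicHom (Polynomial.monic_X_pow 3) x).coeff 2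

/-! ### Auxiliary lemmas -/

lemma h2R : (2 : R2) = 0 := by
  have : (2 : R2) = AdjoinRoot.of _ (2 : ZMod 2) := (map_ofNat _ 2).symm
  rw [this, show (2 : ZMod 2) = 0 by decide, map_zero]

lemma h3R : cR ^ 3 = 0 := by
  rw [cR, ← AdjoinRoot.mk_X, ← map_pow, AdjoinRoot.mk_self]

lemma hp4 : (1 + cR) ^ 4 = 1 := by
  linear_combination (4 + cR) * h3R + (2 * cR + 3 * cR ^ 2) * h2R

lemma h2S : (2 : S2) = 0 := by
  rw [show (2 : S2) = PowerSeries.C (R := R2) 2 from (map_ofNat _ 2).symm, h2R, map_zero]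

lemma h3S : cS ^ 3 = 0 := by rw [cS, ← map_pow, h3R, map_zero]

lemma hdunit : IsUnit (1 + dS) := by
  rw [PowerSeries.isUnit_iff_constantCoeff]
  simp [dS]

lemma hUmul : (1 + cR) ^ 3 * (1 + cR) = 1 := by linear_combination hp4

/-- The unit `(1+c)³` of `R`, with inverse `1+c`. -/
def U2 : R2ˣ := ⟨(1 + cR) ^ 3, 1 + cR, hUmul, by rw [mul_comm]; exact hUmul⟩

lemma hCp : PowerSeries.C (R := R2) (1 + cR) = 1 + cS := by rw [map_add, map_one, cS]

lemma aux (a : ℕ)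
    (hE : (1 + cS) ^ a * (1 + cS + dS) * (1 + dS + cS ^ 2 * dS)
        = (1 + cS) ^ (a + 2) * ((1 + cS) ^ 3 - dS) * (1 + dS)) :
    IsUnit ((1 + cS) ^ a * (1 + cS + dS) * (1 + dS + cS ^ 2 * dS) * Ring.inverse (1 + dS)) ∧
      ∀ i : ℕ, PowerSeries.coeff (R := R2) i
          (Ring.inverse
            ((1 + cS) ^ a * (1 + cS + dS) * (1 + dS + cS ^ 2 * dS) * Ring.inverse (1 + dS)))
        = (1 + cR) ^ (3 * (a + 2) + i + 1) := by
  set F : S2 := (1 + cS) ^ a * (1 + cS + dS) * (1 + dS + cS ^ 2 * dS) * Ring.inverse (1 + dS)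
    with hF
  set G : S2 := PowerSeries.C (R := R2) ((1 + cR) ^ (3 * (a + 2))) * invUnitsSub U2 with hG
  have hinv : (1 + dS) * Ring.inverse (1 + dS) = 1 := Ring.mul_inverse_cancel _ hdunit
  have hiu : invUnitsSub U2 * (PowerSeries.C (R := R2) ((1 + cR) ^ 3) - PowerSeries.X) = 1 :=
    PowerSeries.invUnitsSub_mul_sub U2
  have hpow : (1 + cR) ^ (a + 2) * (1 + cR) ^ (3 * (a + 2)) = 1 := by
    rw [← pow_add, show a + 2 + 3 * (a + 2) = 4 * (a + 2) by ring, pow_mul, hp4, one_pow]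
  have hc : PowerSeries.C (R := R2) ((1 + cR) ^ (a + 2)) * PowerSeries.C (R := R2) ((1 + cR) ^ (3 * (a + 2)))
      = 1 := by rw [← map_mul, hpow, map_one]
  have hCpow : ∀ k : ℕ, PowerSeries.C (R := R2) ((1 + cR) ^ k) = (1 + cS) ^ k := fun k => by
    rw [map_pow, hCp]
  have hFG : F * G = 1 := by
    calc F * G
        = ((1 + cS) ^ (a + 2) * ((1 + cS) ^ 3 - dS) * (1 + dS)) * Ring.inverse (1 + dS) * G := by
          rw [hF, hE]
      _ = ((1 + cS) ^ (a + 2) * PowerSeries.C (R := R2) ((1 + cR) ^ (3 * (a + 2))))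
            * (invUnitsSub U2 * ((1 + cS) ^ 3 - dS)) * ((1 + dS) * Ring.inverse (1 + dS)) := by
          rw [hG]; ring
      _ = 1 := by
          have hiu' : invUnitsSub U2 * ((PowerSeries.C (R := R2)) ((1 + cR) ^ 3) - dS) = 1 := hiu
          rw [← hCpow, hc, ← hCpow 3, hiu', hinv, mul_one, mul_one]
  refine ⟨IsUnit.of_mul_eq_one _ hFG, fun i => ?_⟩
  have hinvF : Ring.inverse F = G := by
    have := Ring.inverse_unit (⟨F, G, hFG, by rw [mul_comm]; exact hFG⟩ : S2ˣ)
    exact this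
  rw [hinvF, hG, PowerSeries.coeff_C_mul, PowerSeries.coeff_invUnitsSub, one_divp,
    ← inv_pow, Units.val_pow_eq_pow_val]
  show (1 + cR) ^ (3 * (a + 2)) * ((U2⁻¹ : R2ˣ) : R2) ^ (i + 1) = _
  have : ((U2⁻¹ : R2ˣ) : R2) = 1 + cR := rfl
  rw [this, ← pow_add, show 3 * (a + 2) + (i + 1) = 3 * (a + 2) + i + 1 by ring]

lemma hE1 : (1 + cS) ^ 1 * (1 + cS + dS) * (1 + dS + cS ^ 2 * dS)
    = (1 + cS) ^ (1 + 2) * ((1 + cS) ^ 3 - dS) * (1 + dS) := by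
  linear_combination (-20 - 17 * dS + 2 * dS ^ 2 - 15 * cS - 14 * cS * dS - 6 * cS ^ 2
      - 6 * cS ^ 2 * dS - cS ^ 3 - cS ^ 3 * dS) * h3S
    + (dS + dS ^ 2 - 2 * cS + 2 * cS * dS ^ 2 - 7 * cS ^ 2 - 5 * cS ^ 2 * dS
      + 2 * cS ^ 2 * dS ^ 2) * h2S

lemma hE3 : (1 + cS) ^ 3 * (1 + cS + dS) * (1 + dS + cS ^ 2 * dS)
    = (1 + cS) ^ (3 + 2) * ((1 + cS) ^ 3 - dS) * (1 + dS) := by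
  linear_combination (-52 - 37 * dS + 14 * dS ^ 2 - 69 * cS - 58 * cS * dS + 8 * cS * dS ^ 2
      - 56 * cS ^ 2 - 51 * cS ^ 2 * dS + 2 * cS ^ 2 * dS ^ 2 - 28 * cS ^ 3 - 27 * cS ^ 3 * dS
      - 8 * cS ^ 4 - 8 * cS ^ 4 * dS - cS ^ 5 - cS ^ 5 * dS) * h3S
    + (dS + dS ^ 2 - 2 * cS + 2 * cS * dS + 4 * cS * dS ^ 2 - 11 * cS ^ 2 - 4 * cS ^ 2 * dS
      + 7 * cS ^ 2 * dS ^ 2) * h2S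

lemma coefc2_one : coefc2 1 = 0 := by
  rw [coefc2, show (1 : R2) = AdjoinRoot.mk _ 1 from (map_one _).symm,
    AdjoinRoot.modByMonicHom_mk]
  rw [(Polynomial.modByMonic_eq_self_iff (monic_X_pow 3)).2 (by
    rw [degree_X_pow, degree_one]; norm_num)]
  simp [Polynomial.coeff_one]

lemma coefc2_sq : coefc2 ((1 + cR) ^ 2) = 1 := by
  have hmk : (1 + cR : R2) = AdjoinRoot.mk _ (1 + Polynomial.X) := by
    rw [map_add, map_one, AdjoinRoot.mk_X, cR]
  have hsq : ((1 : (ZMod 2)[X]) + Polynomial.X) ^ 2 = 1 + Polynomial.X ^ 2 := by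
    rw [add_pow_char, one_pow]
  rw [coefc2, hmk, ← map_pow, AdjoinRoot.modByMonicHom_mk, hsq]
  rw [(Polynomial.modByMonic_eq_self_iff (monic_X_pow 3)).2 (by
    rw [degree_X_pow]
    refine lt_of_le_of_lt (degree_add_le _ _) ?_
    simp only [degree_one, degree_X_pow]
    norm_num)]
  simp [Polynomial.coeff_add, Polynomial.coeff_one, Polynomial.coeff_X_pow]

theorem unit_and_coefc2_mod_four (u : ℕ) (hu : 2 ≤ u) (a : ℕ) (ha : a = 1 ∨ a = 3) :
    IsUnit ((1 + cS) ^ a * (1 + cS + dS) * (1 + dS + cS ^ 2 * dS) * Ring.inverse (1 + dS)) ∧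
      ∀ i : ℕ, i % 4 = 0 →
        coefc2 (PowerSeries.coeff (R := R2) i
            (Ring.inverse
              ((1 + cS) ^ a * (1 + cS + dS) * (1 + dS + cS ^ 2 * dS) * Ring.inverse (1 + dS)))) =
          coefc2 (Ring.inverse ((1 + cR) ^ (a + 1))) ∧
        coefc2 (Ring.inverse ((1 + cR) ^ (a + 1))) = (Nat.choose (a + 2) 2 : ZMod 2) := by
  obtain rfl | rfl := ha
  · obtain ⟨hU, hco⟩ := aux 1 hE1
    refine ⟨hU, fun i hi => ?_⟩
    have hinv2 : Ring.inverse ((1 + cR) ^ (1 + 1)) = (1 + cR) ^ 2 := by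
      have hm : (1 + cR) ^ 2 * (1 + cR) ^ 2 = 1 := by linear_combination hp4
      have := Ring.inverse_unit (⟨(1 + cR) ^ 2, (1 + cR) ^ 2, hm, hm⟩ : R2ˣ)
      rw [show (1 : ℕ) + 1 = 2 from rfl]
      exact this
    obtain ⟨k, rfl⟩ : ∃ k, i = 4 * k :=
      ⟨i / 4, by have := Nat.div_mul_cancel (Nat.dvd_of_mod_eq_zero hi); omega⟩
    rw [hco (4 * k), hinv2]
    constructor
    · rw [show 3 * (1 + 2) + 4 * k + 1 = 2 + 4 * (k + 2) by ring, pow_add, pow_mul, hp4,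
        one_pow, mul_one]
    · rw [coefc2_sq, show Nat.choose (1 + 2) 2 = 3 from rfl]
      decide
  · obtain ⟨hU, hco⟩ := aux 3 hE3
    refine ⟨hU, fun i hi => ?_⟩
    have hinv2 : Ring.inverse ((1 + cR) ^ (3 + 1)) = 1 := by
      rw [show (3 : ℕ) + 1 = 4 from rfl, hp4, Ring.inverse_one]
    obtain ⟨k, rfl⟩ : ∃ k, i = 4 * k :=
      ⟨i / 4, by have := Nat.div_mul_cancel (Nat.dvd_of_mod_eq_zero hi); omega⟩
    rw [hco (4 * k), hinv2]
    constructor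
    · rw [show 3 * (3 + 2) + 4 * k + 1 = 4 * (k + 4) by ring, pow_mul, hp4, one_pow]
    · rw [coefc2_one, show Nat.choose (3 + 2) 2 = 10 from rfl]
      decide

end
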